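/- arXiv:1911.10560 — 3 statements merged into one kernel-verified Lean document; each statement's English description precedes it below -/
import Mathlib

section
/- Let δ > 0, α > 0, C > 0 and r₀ ≥ 1. Suppose f : [r₀, ∞) → ℝ is differentiable with |f'(r)| ≤ δ for all r ≥ r₀, and |f(r)| ≤ C·r^{-α} for all r ≥ r₀. Then there is a constant C' depending only on C and α such that for all r ≥ r₀, |f(r)| ≤ C'·min(δ^{α/(α+1)}, r^{-α}). -/
/-- Interpolation lemma: a derivative bound `δ` together with decay `C·r^{-α}`
at infinity yields the uniform bound `C'·min(δ^{α/(α+1)}, r^{-α})`,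
with `C'` depending only on `C` and `α`. -/
theorem stmt0 (C α : ℝ) (hC : 0 < C) (hα : 0 < α) :
    ∃ C' : ℝ, 0 < C' ∧ ∀ (δ r₀ : ℝ) (f f' : ℝ → ℝ),
      0 < δ → 1 ≤ r₀ →
      (∀ r, r₀ ≤ r → HasDerivAt f (f' r) r) →
      (∀ r, r₀ ≤ r → |f' r| ≤ δ) →
      (∀ r, r₀ ≤ r → |f r| ≤ C * r ^ (-α)) →
      ∀ r, r₀ ≤ r → |f r| ≤ C' * min (δ ^ (α / (α + 1))) (r ^ (-α)) := by
  refine ⟨C + 1, by linarith, ?_⟩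
  intro δ r₀ f f' hδ hr₀ hdiff hderiv hdecay r hr
  have hr1 : (1 : ℝ) ≤ r := le_trans hr₀ hr
  have hrpos : (0 : ℝ) < r := by linarith
  have hα1 : (0 : ℝ) < α + 1 := by linarith
  rcases le_total (r ^ (-α)) (δ ^ (α / (α + 1))) with hcase | hcase
  · rw [min_eq_right hcase]
    have h1 : (0:ℝ) ≤ r ^ (-α) := Real.rpow_nonneg hrpos.le _
    calc |f r| ≤ C * r ^ (-α) := hdecay r hr
      _ ≤ (C + 1) * r ^ (-α) := by nlinarith
  · rw [min_eq_left hcase]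
    set M : ℝ := δ ^ (-(1 / (α + 1))) with hM
    have hMpos : 0 < M := Real.rpow_pos_of_pos hδ _
    have hMα : M ^ (-α) = δ ^ (α / (α + 1)) := by
      rw [hM, ← Real.rpow_mul hδ.le]
      congr 1
      field_simp
    have hrM : r ≤ M := by
      by_contra h
      push_neg at h
      have : r ^ (-α) < M ^ (-α) := by
        exact Real.rpow_lt_rpow_of_neg hMpos h (by linarith)
      rw [hMα] at this
      linarith
    have hMr₀ : r₀ ≤ M := le_trans hr hrM
    -- mean value on Ici r₀
    have hmv : ‖f M - f r‖ ≤ δ * ‖M - r‖ := by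
      exact Convex.norm_image_sub_le_of_norm_hasDerivWithin_le
        (fun x hx => (hdiff x hx).hasDerivWithinAt)
        (fun x hx => by simpa using hderiv x hx) (convex_Ici r₀) hr hMr₀
    have hδM : δ * M ≤ δ ^ (α / (α + 1)) := by
      have : δ * M = δ ^ (α / (α + 1)) := by
        rw [hM]
        nth_rewrite 1 [← Real.rpow_one δ]
        rw [← Real.rpow_add hδ]
        congr 1
        field_simp
        ring
      linarith
    have hfM : |f M| ≤ C * δ ^ (α / (α + 1)) := by
      have := hdecay M hMr₀
      rwa [hMα] at this
    have habs : |f r| ≤ |f M| + δ * (M - r) := by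
      have h1 : |f r - f M| ≤ δ * (M - r) := by
        rw [show f r - f M = -(f M - f r) by ring, abs_neg]
        have : ‖M - r‖ = M - r := by
          rw [Real.norm_eq_abs, abs_of_nonneg (by linarith)]
        rw [← this]
        exact hmv
      calc |f r| = |f M + (f r - f M)| := by ring_nf
        _ ≤ |f M| + |f r - f M| := abs_add_le _ _
        _ ≤ |f M| + δ * (M - r) := by linarith
    have hδr : δ * (M - r) ≤ δ ^ (α / (α + 1)) := by
      have : δ * (M - r) ≤ δ * M := by nlinarith
      linarith
    calc |f r| ≤ |f M| + δ * (M - r) := habs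
      _ ≤ C * δ ^ (α / (α + 1)) + δ ^ (α / (α + 1)) := by linarith
      _ = (C + 1) * δ ^ (α / (α + 1)) := by ring
end

section
/- Let M > 0, q, 𝔞, y, z be real numbers with q² + 𝔞² < M², z² ≤ 𝔞², and y > M + √(M² − q² − 𝔞²). Then (My − q²)·y − M·z² > y·(𝔞² − z²). In particular (My − q²)·y − M·z² > 0. -/
/-!
The difference of the two sides is `y (M y − q² − 𝔞²) + (y − M) z²`, and once `y > M > 0` both
terms are positive or zero: `M y > M² > q² + 𝔞²`. The bound `y > y₊ = M + √(M² − q² − 𝔞²)` gives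
`y > M` because the square root is nonnegative.
-/

theorem mul_sub_sq_mul_sub_mul_sq_gt {M q a y : ℝ} (z : ℝ) (hM : 0 < M)
    (hqa : q ^ 2 + a ^ 2 < M ^ 2) (hy : M < y) :
    (M * y - q ^ 2) * y - M * z ^ 2 > y * (a ^ 2 - z ^ 2) := by
  have hy₀ : 0 < y := hM.trans hy
  have hMy : q ^ 2 + a ^ 2 < M * y := hqa.trans (by rw [sq]; exact mul_lt_mul_of_pos_left hy hM)
  have hpos : 0 < y * (M * y - (q ^ 2 + a ^ 2)) + (y - M) * z ^ 2 :=
    add_pos_of_pos_of_nonneg (mul_pos hy₀ (sub_pos.2 hMy))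
      (mul_nonneg (sub_nonneg.2 hy.le) (sq_nonneg z))
  calc y * (a ^ 2 - z ^ 2)
      < y * (a ^ 2 - z ^ 2) + (y * (M * y - (q ^ 2 + a ^ 2)) + (y - M) * z ^ 2) :=
        lt_add_of_pos_right _ hpos
    _ = (M * y - q ^ 2) * y - M * z ^ 2 := by ring

/-- Key algebraic inequality for the `T`-conditional pseudo-convexity of `y`:
in the non-extremal regime, for `z² ≤ 𝔞²` and `y > y_+`,
`(My − q²)y − Mz² > y(𝔞² − z²)` (hence is positive). -/
theorem stmt11 (M q a y z : ℝ) (hM : 0 < M) (hne : q ^ 2 + a ^ 2 < M ^ 2)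
    (hz : z ^ 2 ≤ a ^ 2) (hy : M + Real.sqrt (M ^ 2 - q ^ 2 - a ^ 2) < y) :
    (M * y - q ^ 2) * y - M * z ^ 2 > y * (a ^ 2 - z ^ 2) ∧
    (M * y - q ^ 2) * y - M * z ^ 2 > 0 := by
  have hyM : M < y := (le_add_of_nonneg_right (Real.sqrt_nonneg _)).trans_lt hy
  have hgt := mul_sub_sq_mul_sub_mul_sq_gt z hM hne hyM
  exact ⟨hgt, (mul_nonneg (hM.trans hyM).le (sub_nonneg.2 hz)).trans_lt hgt⟩
end

section
/- Let U ⊆ ℝⁿ be open, let T and K be smooth vector fields on U with [T, K] = 0, and let H be a smooth 2-form on U which is closed (dH = 0) and invariant under both fields: L_T H = 0 and L_K H = 0. Then the function p ↦ H_p(T(p), K(p)) is locally constant on U. -/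
/-- The partial derivative `∂f/∂xᵢ` of a function on `ℝⁿ = Fin n → ℝ`. -/
noncomputable def pd {n : ℕ} (f : (Fin n → ℝ) → ℝ) (i : Fin n) (x : Fin n → ℝ) : ℝ :=
  fderiv ℝ f x (Pi.single i 1)

/-- Pointwise algebraic identity: the Cartan-formula computation in components. -/
lemma alg_key {n : ℕ} (Hx : Fin n → Fin n → ℝ) (Tx Kx : Fin n → ℝ)
    (h : Fin n → Fin n → Fin n → ℝ) (t k : Fin n → Fin n → ℝ)
    (hanti : ∀ a b, Hx a b = -Hx b a)
    (hclosed : ∀ a b c, h b c a + h c a b + h a b c = 0)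
    (hLT : ∀ a b, (∑ e, (Tx e * h a b e + t e a * Hx e b + t e b * Hx a e)) = 0)
    (hLK : ∀ a b, (∑ e, (Kx e * h a b e + k e a * Hx e b + k e b * Hx a e)) = 0)
    (hbr : ∀ a, (∑ e, (Tx e * k a e - Kx e * t a e)) = 0)
    (c : Fin n) :
    (∑ a, ∑ b, (h a b c * Tx a * Kx b + Hx a b * t a c * Kx b + Hx a b * Tx a * k b c)) = 0 := by
  -- zero facts coming from the hypotheses
  have Z1 : (∑ a, ∑ b, ((h b c a + h c a b + h a b c) * Tx a * Kx b)) = 0 :=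
    Finset.sum_eq_zero fun a _ => Finset.sum_eq_zero fun b _ => by
      rw [hclosed a b c, zero_mul, zero_mul]
  simp only [add_mul, Finset.sum_add_distrib] at Z1
  have Z2 : (∑ b, ∑ e, Kx b * (Tx e * h b c e)) + (∑ b, ∑ e, Kx b * (t e b * Hx e c))
      + (∑ b, ∑ e, Kx b * (t e c * Hx b e)) = 0 := by
    rw [← Finset.sum_add_distrib, ← Finset.sum_add_distrib]
    refine Finset.sum_eq_zero fun b _ => ?_
    rw [← Finset.sum_add_distrib, ← Finset.sum_add_distrib]
    calc ∑ e, (Kx b * (Tx e * h b c e) + Kx b * (t e b * Hx e c) + Kx b * (t e c * Hx b e))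
        = Kx b * ∑ e, (Tx e * h b c e + t e b * Hx e c + t e c * Hx b e) := by
          rw [Finset.mul_sum]; exact Finset.sum_congr rfl fun e _ => by ring
      _ = 0 := by rw [hLT b c, mul_zero]
  have Z3 : (∑ a, ∑ e, Tx a * (Kx e * h c a e)) + (∑ a, ∑ e, Tx a * (k e c * Hx e a))
      + (∑ a, ∑ e, Tx a * (k e a * Hx c e)) = 0 := by
    rw [← Finset.sum_add_distrib, ← Finset.sum_add_distrib]
    refine Finset.sum_eq_zero fun a _ => ?_
    rw [← Finset.sum_add_distrib, ← Finset.sum_add_distrib]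
    calc ∑ e, (Tx a * (Kx e * h c a e) + Tx a * (k e c * Hx e a) + Tx a * (k e a * Hx c e))
        = Tx a * ∑ e, (Kx e * h c a e + k e c * Hx e a + k e a * Hx c e) := by
          rw [Finset.mul_sum]; exact Finset.sum_congr rfl fun e _ => by ring
      _ = 0 := by rw [hLK c a, mul_zero]
  have Z4 : (∑ e, ∑ a, Hx e c * (Tx a * k e a)) - (∑ e, ∑ a, Hx e c * (Kx a * t e a)) = 0 := by
    rw [← Finset.sum_sub_distrib]
    refine Finset.sum_eq_zero fun e _ => ?_
    rw [← Finset.sum_sub_distrib]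
    calc ∑ a, (Hx e c * (Tx a * k e a) - Hx e c * (Kx a * t e a))
        = Hx e c * ∑ a, (Tx a * k e a - Kx a * t e a) := by
          rw [Finset.mul_sum]; exact Finset.sum_congr rfl fun a _ => by ring
      _ = 0 := by rw [hbr e, mul_zero]
  -- identifications between the various double sums
  have E1 : (∑ b, ∑ e, Kx b * (Tx e * h b c e)) = ∑ a, ∑ b, h b c a * Tx a * Kx b := by
    rw [Finset.sum_comm]
    exact Finset.sum_congr rfl fun a _ => Finset.sum_congr rfl fun b _ => by ring
  have E2 : (∑ a, ∑ e, Tx a * (Kx e * h c a e)) = ∑ a, ∑ b, h c a b * Tx a * Kx b :=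
    Finset.sum_congr rfl fun a _ => Finset.sum_congr rfl fun b _ => by ring
  have E3 : (∑ b, ∑ e, Kx b * (t e c * Hx b e)) + (∑ a, ∑ b, Hx a b * t a c * Kx b) = 0 := by
    rw [Finset.sum_comm]
    rw [← Finset.sum_add_distrib]
    refine Finset.sum_eq_zero fun a _ => ?_
    rw [← Finset.sum_add_distrib]
    refine Finset.sum_eq_zero fun b _ => ?_
    rw [hanti b a]; ring
  have E4 : (∑ a, ∑ e, Tx a * (k e c * Hx e a)) + (∑ a, ∑ b, Hx a b * Tx a * k b c) = 0 := by
    rw [← Finset.sum_add_distrib]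
    refine Finset.sum_eq_zero fun a _ => ?_
    rw [← Finset.sum_add_distrib]
    refine Finset.sum_eq_zero fun b _ => ?_
    rw [hanti b a]; ring
  have E5 : (∑ b, ∑ e, Kx b * (t e b * Hx e c)) = ∑ e, ∑ a, Hx e c * (Kx a * t e a) := by
    rw [Finset.sum_comm]
    exact Finset.sum_congr rfl fun e _ => Finset.sum_congr rfl fun a _ => by ring
  have E6 : (∑ a, ∑ e, Tx a * (k e a * Hx c e)) + (∑ e, ∑ a, Hx e c * (Tx a * k e a)) = 0 := by
    rw [Finset.sum_comm]
    rw [← Finset.sum_add_distrib]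
    refine Finset.sum_eq_zero fun e _ => ?_
    rw [← Finset.sum_add_distrib]
    refine Finset.sum_eq_zero fun a _ => ?_
    rw [hanti c e]; ring
  simp only [Finset.sum_add_distrib]
  linarith [Z1, Z2, Z3, Z4, E1, E2, E3, E4, E5, E6]

/-- If `T`, `K` are commuting smooth vector fields on an open `U ⊆ ℝⁿ` and `H`
is a closed smooth 2-form with `L_T H = 0` and `L_K H = 0`, then
`x ↦ H_x(T,K) = H_{ab}T^aK^b` is locally constant on `U`.
(All objects are written in components; `L` is the coordinate Lie derivative.) -/
theorem stmt17 (n : ℕ) (U : Set (Fin n → ℝ)) (hU : IsOpen U)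
    (T K : (Fin n → ℝ) → (Fin n → ℝ)) (H : (Fin n → ℝ) → Fin n → Fin n → ℝ)
    (hT : ContDiffOn ℝ (⊤ : ℕ∞) T U) (hK : ContDiffOn ℝ (⊤ : ℕ∞) K U)
    (hH : ∀ a b, ContDiffOn ℝ (⊤ : ℕ∞) (fun x => H x a b) U)
    (hanti : ∀ x ∈ U, ∀ a b, H x a b = -H x b a)
    (hclosed : ∀ x ∈ U, ∀ a b c,
      pd (fun y => H y b c) a x + pd (fun y => H y c a) b x + pd (fun y => H y a b) c x = 0)
    (hLT : ∀ x ∈ U, ∀ a b,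
      (∑ c, (T x c * pd (fun y => H y a b) c x
        + pd (fun y => T y c) a x * H x c b + pd (fun y => T y c) b x * H x a c)) = 0)
    (hLK : ∀ x ∈ U, ∀ a b,
      (∑ c, (K x c * pd (fun y => H y a b) c x
        + pd (fun y => K y c) a x * H x c b + pd (fun y => K y c) b x * H x a c)) = 0)
    (hbracket : ∀ x ∈ U, ∀ a,
      (∑ c, (T x c * pd (fun y => K y a) c x - K x c * pd (fun y => T y a) c x)) = 0) :
    ∀ x ∈ U, ∃ ε > 0, Metric.ball x ε ⊆ U ∧
      ∀ y ∈ Metric.ball x ε,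
        (∑ a, ∑ b, H y a b * T y a * K y b) = ∑ a, ∑ b, H x a b * T x a * K x b := by
  have main : ∀ z ∈ U, HasFDerivAt (fun y => ∑ a, ∑ b, H y a b * T y a * K y b)
      (0 : (Fin n → ℝ) →L[ℝ] ℝ) z := by
    intro z hz
    have hmem : U ∈ nhds z := hU.mem_nhds hz
    have hHd : ∀ a b, DifferentiableAt ℝ (fun y => H y a b) z := fun a b =>
      ((hH a b).contDiffAt hmem).differentiableAt (by simp)
    have hTz : DifferentiableAt ℝ T z := (hT.contDiffAt hmem).differentiableAt (by simp)
    have hKz : DifferentiableAt ℝ K z := (hK.contDiffAt hmem).differentiableAt (by simp)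
    have hTd : ∀ a, DifferentiableAt ℝ (fun y => T y a) z := fun a => by
      have := ((ContinuousLinearMap.proj a : ((Fin n → ℝ)) →L[ℝ] ℝ).differentiableAt).comp z hTz
      exact this
    have hKd : ∀ a, DifferentiableAt ℝ (fun y => K y a) z := fun a => by
      have := ((ContinuousLinearMap.proj a : ((Fin n → ℝ)) →L[ℝ] ℝ).differentiableAt).comp z hKz
      exact this
    set D : Fin n → Fin n → ((Fin n → ℝ) →L[ℝ] ℝ) := fun a b =>
      (H z a b * T z a) • fderiv ℝ (fun y => K y b) z
        + K z b • (H z a b • fderiv ℝ (fun y => T y a) z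
            + T z a • fderiv ℝ (fun y => H y a b) z) with hD
    have hterm : ∀ a b, HasFDerivAt (fun y => H y a b * T y a * K y b) (D a b) z := fun a b =>
      ((hHd a b).hasFDerivAt.mul (hTd a).hasFDerivAt).mul (hKd b).hasFDerivAt
    have hsum : HasFDerivAt (fun y => ∑ a, ∑ b, H y a b * T y a * K y b)
        (∑ a, ∑ b, D a b) z :=
      HasFDerivAt.fun_sum fun a _ => HasFDerivAt.fun_sum fun b _ => hterm a b
    have happ : ∀ c : Fin n, (∑ a, ∑ b, D a b) (Pi.single c 1) = 0 := by
      intro c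
      have expand : (∑ a : Fin n, ∑ b : Fin n, D a b) (Pi.single c 1)
          = ∑ a, ∑ b, (pd (fun y => H y a b) c z * T z a * K z b
              + H z a b * pd (fun y => T y a) c z * K z b
              + H z a b * T z a * pd (fun y => K y b) c z) := by
        simp only [ContinuousLinearMap.coe_sum', Finset.sum_apply]
        refine Finset.sum_congr rfl fun a _ => Finset.sum_congr rfl fun b _ => ?_
        simp only [hD, ContinuousLinearMap.add_apply, ContinuousLinearMap.smul_apply,
          smul_eq_mul]
        unfold pd; ring
      rw [expand]
      exact alg_key (H z) (T z) (K z)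
        (fun a b e => pd (fun y => H y a b) e z)
        (fun a e => pd (fun y => T y a) e z)
        (fun a e => pd (fun y => K y a) e z)
        (hanti z hz)
        (fun a b c' => hclosed z hz a b c')
        (fun a b => hLT z hz a b)
        (fun a b => hLK z hz a b)
        (fun a => hbracket z hz a) c
    have hzero : (∑ a : Fin n, ∑ b : Fin n, D a b) = 0 := by
      apply ContinuousLinearMap.ext
      intro v
      have hv : (∑ i, v i • (Pi.single i 1 : Fin n → ℝ)) = v := by
        funext j
        simp [Finset.sum_apply, Pi.single_apply]
      calc (∑ a : Fin n, ∑ b : Fin n, D a b) v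
          = (∑ a : Fin n, ∑ b : Fin n, D a b) (∑ i, v i • (Pi.single i 1 : Fin n → ℝ)) := by rw [hv]
        _ = ∑ i, v i • (∑ a : Fin n, ∑ b : Fin n, D a b) ((Pi.single i 1 : Fin n → ℝ)) := by
            rw [map_sum]; exact Finset.sum_congr rfl fun i _ => by
              rw [ContinuousLinearMap.map_smul]
        _ = 0 := by simp [happ]
    exact hzero ▸ hsum
  intro x hx
  obtain ⟨ε, hε, hball⟩ := Metric.isOpen_iff.mp hU x hx
  refine ⟨ε, hε, hball, fun y hy => ?_⟩
  have hconv : Convex ℝ (Metric.ball x ε) := convex_ball x ε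
  have hle := hconv.norm_image_sub_le_of_norm_hasFDerivWithin_le
    (C := 0) (f' := fun _ => (0 : (Fin n → ℝ) →L[ℝ] ℝ))
    (fun w hw => (main w (hball hw)).hasFDerivWithinAt)
    (fun w _ => by simp) (Metric.mem_ball_self hε) hy
  have : ‖(∑ a, ∑ b, H y a b * T y a * K y b) - ∑ a, ∑ b, H x a b * T x a * K x b‖ ≤ 0 := by
    simpa using hle
  have := norm_le_zero_iff.mp this
  linarith [sub_eq_zero.mp this]
end
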